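/- Let q1, q2 be quadratic forms on ℚ^4 such that: (i) for every prime p there exists a nonzero vector v ∈ ℚ_p^4 with q1(v) = q2(v) = 0 (after base change to ℚ_p), (ii) there exists a nonzero vector v ∈ ℝ^4 with q1(v) = q2(v) = 0 (after base change to ℝ), and (iii) there is no nonzero vector v ∈ ℚ^4 with q1(v) = q2(v) = 0. Define Q1, Q2 on coordinates x1,…,x10 by Q1 = q1(x1,…,x4) + x5·x6 + x8·x9 and Q2 = q2(x1,…,x4) + x5·x7 + x8·x10. Then for every prime p there is a 5-dimensional ℚ_p-linear subspace of ℚ_p^10 on which Q1 and Q2 both vanish identically, and there is a 5-dimensional ℝ-linear subspace of ℝ^10 on which Q1 and Q2 both vanish identically, but there is no 5-dimensional ℚ-linear subspace of ℚ^10 on which Q1 and Q2 both vanish identically. (Hence the local-global principle for 5-dimensional vanishing subspaces can fail when no member of the pencil is nonsingular.) -/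

import Mathlib

/-- The base change of a quadratic form on `K^m` along a field homomorphism `σ : K →+* L`,
obtained by applying `σ` entrywise to the Gram matrix of the form. -/
noncomputable def QuadraticForm.mapBase {K L : Type*} [Field K] [Field L] [Invertible (2 : K)]
    {m : ℕ} (σ : K →+* L) (q : QuadraticForm K (Fin m → K)) :
    QuadraticForm L (Fin m → L) :=
  ((QuadraticMap.toMatrix' q).map σ).toQuadraticMap'

/-- Given a quadratic form `q1` on `F^4`, the quadratic form
`Q1(x1,…,x10) = q1(x1,x2,x3,x4) + x5·x6 + x8·x9` on `F^10` (indices are 0-based below). -/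
noncomputable def amerFormFst10 {F : Type*} [Field F] (q1 : QuadraticForm F (Fin 4 → F)) :
    QuadraticForm F (Fin 10 → F) :=
  q1.comp (LinearMap.funLeft F F (Fin.castLE (by omega))) +
    QuadraticMap.proj (R := F) (A := F) (4 : Fin 10) 5 +
    QuadraticMap.proj (R := F) (A := F) (7 : Fin 10) 8

/-- Given a quadratic form `q2` on `F^4`, the quadratic form
`Q2(x1,…,x10) = q2(x1,x2,x3,x4) + x5·x7 + x8·x10` on `F^10` (indices are 0-based below). -/
noncomputable def amerFormSnd10 {F : Type*} [Field F] (q2 : QuadraticForm F (Fin 4 → F)) :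
    QuadraticForm F (Fin 10 → F) :=
  q2.comp (LinearMap.funLeft F F (Fin.castLE (by omega))) +
    QuadraticMap.proj (R := F) (A := F) (4 : Fin 10) 6 +
    QuadraticMap.proj (R := F) (A := F) (7 : Fin 10) 9

/-- The quadratic forms `f` and `g` both vanish identically on some `d`-dimensional
linear subspace of `L^m`. -/
def BothVanishOnSubspace {L : Type*} [Field L] {m : ℕ}
    (f g : QuadraticForm L (Fin m → L)) (d : ℕ) : Prop :=
  ∃ W : Submodule L (Fin m → L), Module.finrank L ↥W = d ∧ ∀ x ∈ W, f x = 0 ∧ g x = 0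

/-!
A common nontrivial zero `v` of `q1` and `q2` over any field yields a `5`-dimensional common
isotropic subspace of `Q1`, `Q2`: the span of `(v, 0, …, 0)` and of the basis vectors of
`x6, x7, x9, x10`, on which the hyperbolic terms vanish because `x5 = x8 = 0`. Since `Q1`, `Q2` are
built from `q1`, `q2` compatibly with base change, this gives the subspaces over `ℚ_p` and `ℝ`.

Conversely, let `W` be a `5`-dimensional common isotropic subspace over `ℚ`. A vector `y ∈ W`
with `y5 = y8 = 0` has `(y1, …, y4)` as a common zero of `q1`, `q2`, hence zero head, and
polarizing `Q1`, `Q2` between such a `y` and any `x ∈ W` gives `x5 y6 + x8 y9 = 0` and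
`x5 y7 + x8 y10 = 0`. If all of `W` lies in `x5 = x8 = 0` its vectors are determined by
`x6, x7, x9, x10`; otherwise some `x ∈ W` has `x5 ≠ 0` (resp. `x8 ≠ 0`), and then vectors of
`W` are determined by `x5, x8, x9, x10` (resp. `x5, x8, x6, x7`). Either way `dim W ≤ 4`.
-/

open scoped Matrix

namespace Matrix

variable {R : Type*} [CommRing R] {n : Type*} [Fintype n] [DecidableEq n]

theorem toQuadraticForm'_add (M N : Matrix n n R) :
    (M + N).toQuadraticForm' = M.toQuadraticForm' + N.toQuadraticForm' := by
  ext x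
  simp [toQuadraticForm']

theorem toQuadraticForm'_transpose (M : Matrix n n R) :
    Mᵀ.toQuadraticForm' = M.toQuadraticForm' := by
  ext x
  simp only [toQuadraticForm', LinearMap.BilinMap.toQuadraticMap_apply, toLinearMap₂'_apply']
  rw [mulVec_transpose, dotProduct_comm, dotProduct_mulVec]

theorem toQuadraticForm'_single (i j : n) :
    (single i j 1).toQuadraticForm' = QuadraticMap.proj (R := R) (A := R) i j := by
  ext x
  simp [toQuadraticForm', toLinearMap₂'_apply, single_apply, ite_and, Finset.sum_ite_eq]

theorem toQuadraticForm'_transpose_mul_mul {m : Type*} [Fintype m] [DecidableEq m]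
    (M : Matrix n n R) (P : Matrix n m R) :
    (Pᵀ * M * P).toQuadraticForm' = M.toQuadraticForm'.comp (toLin' P) := by
  ext x
  simp [toQuadraticForm', ← toLinearMap₂'_comp, QuadraticMap.comp_apply]

end Matrix

namespace QuadraticForm

theorem toMatrix'_toQuadraticForm' {K : Type*} [Field K] [Invertible (2 : K)] {n : Type*}
    [Fintype n] [DecidableEq n] (M : Matrix n n K) :
    M.toQuadraticForm'.toMatrix' = (⅟2 : K) • (M + Mᵀ) := by
  ext i j
  simp [toMatrix', Matrix.toQuadraticForm', LinearMap.toMatrix₂'_apply,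
    QuadraticMap.associated_toQuadraticMap, Matrix.toLinearMap₂'_apply, Pi.single_apply, mul_add]

variable {K L : Type*} [Field K] [Field L] [Invertible (2 : K)] (σ : K →+* L) {m : ℕ}

theorem mapBase_def (q : QuadraticForm K (Fin m → K)) :
    q.mapBase σ = (q.toMatrix'.map σ).toQuadraticForm' := rfl

theorem mapBase_toQuadraticForm' (M : Matrix (Fin m) (Fin m) K) :
    M.toQuadraticForm'.mapBase σ = (M.map σ).toQuadraticForm' := by
  -- the Gram matrix of `M.toQuadraticForm'` is `⅟2 • (M + Mᵀ)`, and `Mᵀ` gives the same form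
  have h2 : σ ⅟2 * 2 = 1 := by rw [← map_ofNat σ 2, ← map_mul, invOf_mul_self, map_one]
  have hmap : ((⅟2 : K) • (M + Mᵀ)).map σ = σ ⅟2 • (M.map σ + (M.map σ)ᵀ) := by
    ext i j
    simp [mul_add]
  ext x
  have htr := congrArg (· x) (M.map σ).toQuadraticForm'_transpose
  rw [mapBase_def, toMatrix'_toQuadraticForm', hmap]
  simp only [Matrix.toQuadraticForm', LinearMap.BilinMap.toQuadraticMap_apply, map_smul,
    map_add] at htr ⊢
  simp only [LinearMap.smul_apply, LinearMap.add_apply, htr]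
  linear_combination Matrix.toLinearMap₂' L (M.map σ) x x * h2

theorem mapBase_add (q q' : QuadraticForm K (Fin m → K)) :
    (q + q').mapBase σ = q.mapBase σ + q'.mapBase σ := by
  simp only [mapBase_def, toMatrix', map_add, Matrix.map_add _ (map_add σ),
    Matrix.toQuadraticForm'_add]

theorem mapBase_proj (i j : Fin m) :
    mapBase σ (QuadraticMap.proj (R := K) (A := K) i j) = QuadraticMap.proj i j := by
  rw [← Matrix.toQuadraticForm'_single, mapBase_toQuadraticForm', Matrix.map_single, map_one,
    Matrix.toQuadraticForm'_single]

theorem mapBase_comp_funLeft {n : ℕ} (q : QuadraticForm K (Fin n → K)) (f : Fin n → Fin m) :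
    mapBase σ (q.comp (LinearMap.funLeft K K f)) =
      (q.mapBase σ).comp (LinearMap.funLeft L L f) := by
  have hP : (LinearMap.toMatrix' (LinearMap.funLeft K K f)).map σ =
      LinearMap.toMatrix' (LinearMap.funLeft L L f) := by
    ext i j
    simp [LinearMap.toMatrix'_apply, LinearMap.funLeft_apply, Pi.single_apply, apply_ite]
  rw [mapBase_def, toMatrix'_comp, Matrix.map_mul, Matrix.map_mul, Matrix.transpose_map, hP,
    Matrix.toQuadraticForm'_transpose_mul_mul, Matrix.toLin'_toMatrix', mapBase_def]

end QuadraticForm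

theorem Submodule.finrank_le_card_of_forall_apply_eq_zero {F : Type*} [Field F] {ι κ : Type*}
    [Fintype κ] (W : Submodule F (ι → F)) (c : κ → ι)
    (hc : ∀ x ∈ W, (∀ k, x (c k) = 0) → x = 0) :
    Module.finrank F W ≤ Fintype.card κ := by
  have hinj : Function.Injective ((LinearMap.funLeft F F c).comp W.subtype) := by
    rw [← LinearMap.ker_eq_bot, LinearMap.ker_eq_bot']
    exact fun x hx => Subtype.ext (hc x x.2 (congrFun hx))
  simpa using LinearMap.finrank_le_finrank_of_injective hinj

section BaseChange

variable {K L : Type*} [Field K] [Field L] [Invertible (2 : K)] (σ : K →+* L)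

theorem mapBase_amerFormFst10 (q : QuadraticForm K (Fin 4 → K)) :
    (amerFormFst10 q).mapBase σ = amerFormFst10 (q.mapBase σ) := by
  simp only [amerFormFst10, QuadraticForm.mapBase_add, QuadraticForm.mapBase_comp_funLeft,
    QuadraticForm.mapBase_proj]

theorem mapBase_amerFormSnd10 (q : QuadraticForm K (Fin 4 → K)) :
    (amerFormSnd10 q).mapBase σ = amerFormSnd10 (q.mapBase σ) := by
  simp only [amerFormSnd10, QuadraticForm.mapBase_add, QuadraticForm.mapBase_comp_funLeft,
    QuadraticForm.mapBase_proj]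

end BaseChange

section AmerForms

variable {F : Type*} [Field F]

theorem amerFormFst10_apply (q : QuadraticForm F (Fin 4 → F)) (x : Fin 10 → F) :
    amerFormFst10 q x = q (x ∘ Fin.castLE (by omega)) + x 4 * x 5 + x 7 * x 8 := rfl

theorem amerFormSnd10_apply (q : QuadraticForm F (Fin 4 → F)) (x : Fin 10 → F) :
    amerFormSnd10 q x = q (x ∘ Fin.castLE (by omega)) + x 4 * x 6 + x 7 * x 9 := rfl

theorem bothVanishOnSubspace_amerForms_of_common_zero {q1 q2 : QuadraticForm F (Fin 4 → F)}
    {v : Fin 4 → F} (hv : v ≠ 0) (h1 : q1 v = 0) (h2 : q2 v = 0) :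
    BothVanishOnSubspace (amerFormFst10 q1) (amerFormSnd10 q2) 5 := by
  classical
  let u : Fin 10 → F := fun j => if h : (j : ℕ) < 4 then v ⟨j, h⟩ else 0
  let b : Fin 5 → Fin 10 → F :=
    ![u, Pi.single 5 1, Pi.single 6 1, Pi.single 8 1, Pi.single 9 1]
  have hcoord : ∀ c : Fin 5 → F,
      (∑ i, c i • b i) ∘ Fin.castLE (by omega) = c 0 • v ∧
      (∑ i, c i • b i) 4 = 0 ∧ (∑ i, c i • b i) 5 = c 1 ∧
      (∑ i, c i • b i) 6 = c 2 ∧ (∑ i, c i • b i) 7 = 0 ∧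
      (∑ i, c i • b i) 8 = c 3 ∧ (∑ i, c i • b i) 9 = c 4 := by
    intro c
    refine ⟨funext fun i => ?_, ?_, ?_, ?_, ?_, ?_, ?_⟩
    · fin_cases i <;> simp [Fin.sum_univ_five, b, u]
    all_goals simp [Fin.sum_univ_five, b, u]
  have hb : LinearIndependent F b := by
    rw [Fintype.linearIndependent_iff]
    intro c hc
    obtain ⟨hc0, -, hc1, hc2, -, hc3, hc4⟩ := hcoord c
    rw [hc] at hc0 hc1 hc2 hc3 hc4
    have : c 0 = 0 := (smul_eq_zero.mp hc0.symm).resolve_right hv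
    intro i
    fin_cases i <;> simp_all
  refine ⟨Submodule.span F (Set.range b), by rw [finrank_span_eq_card hb, Fintype.card_fin], ?_⟩
  intro x hx
  obtain ⟨c, rfl⟩ := (Submodule.mem_span_range_iff_exists_fun F).mp hx
  obtain ⟨hc, h4, -, -, h7, -, -⟩ := hcoord c
  rw [amerFormFst10_apply, amerFormSnd10_apply, hc, h4, h7, QuadraticMap.map_smul,
    QuadraticMap.map_smul, h1, h2]
  simp

section Isotropic

variable {q1 q2 : QuadraticForm F (Fin 4 → F)} {W : Submodule F (Fin 10 → F)}
  (hq : ¬ ∃ v : Fin 4 → F, v ≠ 0 ∧ q1 v = 0 ∧ q2 v = 0)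
  (hW : ∀ x ∈ W, amerFormFst10 q1 x = 0 ∧ amerFormSnd10 q2 x = 0)
include hq hW

theorem amerForms_head_eq_zero {y : Fin 10 → F} (hy : y ∈ W) (h4 : y 4 = 0) (h7 : y 7 = 0) :
    (y ∘ Fin.castLE (by omega) : Fin 4 → F) = 0 := by
  by_contra hne
  obtain ⟨hy1, hy2⟩ := hW y hy
  rw [amerFormFst10_apply, h4, h7] at hy1
  rw [amerFormSnd10_apply, h4, h7] at hy2
  exact hq ⟨_, hne, by simpa using hy1, by simpa using hy2⟩

theorem amerForms_eq_zero_of_mem {y : Fin 10 → F} (hy : y ∈ W) (h4 : y 4 = 0) (h5 : y 5 = 0)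
    (h6 : y 6 = 0) (h7 : y 7 = 0) (h8 : y 8 = 0) (h9 : y 9 = 0) : y = 0 := by
  have h0 := congrFun (amerForms_head_eq_zero hq hW hy h4 h7)
  funext i
  fin_cases i
  exacts [h0 0, h0 1, h0 2, h0 3, h4, h5, h6, h7, h8, h9]

theorem amerForms_polar_eq_zero {x y : Fin 10 → F} (hx : x ∈ W) (hy : y ∈ W) (h4 : y 4 = 0)
    (h7 : y 7 = 0) : x 4 * y 5 + x 7 * y 8 = 0 ∧ x 4 * y 6 + x 7 * y 9 = 0 := by
  -- `Q(x + y) - Q(x)`, in which the `q`-parts cancel because `y` has zero head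
  have hhead : ((x + y) ∘ Fin.castLE (by omega) : Fin 4 → F) = x ∘ Fin.castLE (by omega) := by
    rw [Pi.add_comp, amerForms_head_eq_zero hq hW hy h4 h7, add_zero]
  obtain ⟨hxy1, hxy2⟩ := hW (x + y) (W.add_mem hx hy)
  obtain ⟨hx1, hx2⟩ := hW x hx
  rw [amerFormFst10_apply, hhead] at hxy1
  rw [amerFormSnd10_apply, hhead] at hxy2
  rw [amerFormFst10_apply] at hx1
  rw [amerFormSnd10_apply] at hx2
  simp only [Pi.add_apply, h4, h7, add_zero] at hxy1 hxy2
  exact ⟨by linear_combination hxy1 - hx1, by linear_combination hxy2 - hx2⟩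

theorem amerForms_finrank_le_four : Module.finrank F W ≤ 4 := by
  have key (c : Fin 4 → Fin 10) (hc : ∀ y ∈ W, (∀ k, y (c k) = 0) → y = 0) :
      Module.finrank F W ≤ 4 := by
    simpa using Submodule.finrank_le_card_of_forall_apply_eq_zero W c hc
  by_cases hA : ∃ x ∈ W, x 4 ≠ 0 ∨ x 7 ≠ 0
  · obtain ⟨x, hx, hx4 | hx7⟩ := hA
    · refine key ![4, 7, 8, 9] fun y hy hc => ?_
      obtain ⟨h4, h7, h8, h9⟩ : y 4 = 0 ∧ y 7 = 0 ∧ y 8 = 0 ∧ y 9 = 0 :=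
        ⟨hc 0, hc 1, hc 2, hc 3⟩
      obtain ⟨h5, h6⟩ := amerForms_polar_eq_zero hq hW hx hy h4 h7
      simp only [h8, h9, mul_zero, add_zero, mul_eq_zero, hx4, false_or] at h5 h6
      exact amerForms_eq_zero_of_mem hq hW hy h4 h5 h6 h7 h8 h9
    · refine key ![4, 7, 5, 6] fun y hy hc => ?_
      obtain ⟨h4, h7, h5, h6⟩ : y 4 = 0 ∧ y 7 = 0 ∧ y 5 = 0 ∧ y 6 = 0 :=
        ⟨hc 0, hc 1, hc 2, hc 3⟩
      obtain ⟨h8, h9⟩ := amerForms_polar_eq_zero hq hW hx hy h4 h7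
      simp only [h5, h6, mul_zero, zero_add, mul_eq_zero, hx7, false_or] at h8 h9
      exact amerForms_eq_zero_of_mem hq hW hy h4 h5 h6 h7 h8 h9
  · refine key ![5, 6, 8, 9] fun y hy hc => ?_
    obtain ⟨h5, h6, h8, h9⟩ : y 5 = 0 ∧ y 6 = 0 ∧ y 8 = 0 ∧ y 9 = 0 :=
      ⟨hc 0, hc 1, hc 2, hc 3⟩
    have h47 : y 4 = 0 ∧ y 7 = 0 := by simpa [not_or] using fun h => hA ⟨y, hy, h⟩
    exact amerForms_eq_zero_of_mem hq hW hy h47.1 h5 h6 h47.2 h8 h9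

end Isotropic

theorem not_bothVanishOnSubspace_amerForms {q1 q2 : QuadraticForm F (Fin 4 → F)}
    (hq : ¬ ∃ v : Fin 4 → F, v ≠ 0 ∧ q1 v = 0 ∧ q2 v = 0) :
    ¬ BothVanishOnSubspace (amerFormFst10 q1) (amerFormSnd10 q2) 5 := by
  rintro ⟨W, hdim, hW⟩
  have := amerForms_finrank_le_four hq hW
  omega

end AmerForms

/-- If `q1`, `q2` are quadratic forms on `ℚ^4` with a common nontrivial zero over every
`ℚ_p` and over `ℝ`, but with no common nontrivial zero over `ℚ`, then the forms
`Q1 = q1(x1,…,x4) + x5 x6 + x8 x9` and `Q2 = q2(x1,…,x4) + x5 x7 + x8 x10` on `10`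
variables vanish on a common `5`-dimensional subspace over every `ℚ_p` and over `ℝ`, but
not over `ℚ`: the local-global principle fails for `5`-dimensional vanishing subspaces. -/
theorem amer_local_global_failure_ten (q1 q2 : QuadraticForm ℚ (Fin 4 → ℚ))
    (hp : ∀ (p : ℕ) [Fact p.Prime], ∃ v : Fin 4 → ℚ_[p], v ≠ 0 ∧
      (q1.mapBase (algebraMap ℚ ℚ_[p])) v = 0 ∧ (q2.mapBase (algebraMap ℚ ℚ_[p])) v = 0)
    (hr : ∃ v : Fin 4 → ℝ, v ≠ 0 ∧
      (q1.mapBase (algebraMap ℚ ℝ)) v = 0 ∧ (q2.mapBase (algebraMap ℚ ℝ)) v = 0)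
    (hq : ¬ ∃ v : Fin 4 → ℚ, v ≠ 0 ∧ q1 v = 0 ∧ q2 v = 0) :
    (∀ (p : ℕ) [Fact p.Prime],
      BothVanishOnSubspace ((amerFormFst10 q1).mapBase (algebraMap ℚ ℚ_[p]))
        ((amerFormSnd10 q2).mapBase (algebraMap ℚ ℚ_[p])) 5) ∧
    BothVanishOnSubspace ((amerFormFst10 q1).mapBase (algebraMap ℚ ℝ))
      ((amerFormSnd10 q2).mapBase (algebraMap ℚ ℝ)) 5 ∧
    ¬ BothVanishOnSubspace (amerFormFst10 q1) (amerFormSnd10 q2) 5 := by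
  refine ⟨fun p _ => ?_, ?_, not_bothVanishOnSubspace_amerForms hq⟩
  · obtain ⟨v, hv, h1, h2⟩ := hp p
    rw [mapBase_amerFormFst10, mapBase_amerFormSnd10]
    exact bothVanishOnSubspace_amerForms_of_common_zero hv h1 h2
  · obtain ⟨v, hv, h1, h2⟩ := hr
    rw [mapBase_amerFormFst10, mapBase_amerFormSnd10]
    exact bothVanishOnSubspace_amerForms_of_common_zero hv h1 h2
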